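/- (Odometer characterization) Let u_* : V → ℕ with finite support A_*, and let σ_* = σ_0 + Δ_ρ u_*. Suppose (i) σ_*(x) ≤ 1 for all x, (ii) σ_*(x) = 1 for all x ∈ A_*, and (iii) Top_ρ(u_*) is acyclic on A_*. Then there exists a finite complete legal firing sequence for σ_0 and its odometer function equals u_*. -/

import Mathlib

open scoped BigOperators

open Classical in
/-- Number of occurrences of the edge `e` among the rotors `ρ_1(s e), …, ρ_n(s e)`. -/
noncomputable def Rcount {V E : Type*} (src : E → V) (ρ : V → ℕ → E) (e : E) (n : ℕ) : ℕ :=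
  ((Finset.Icc 1 n).filter fun k => ρ (src e) k = e).card

open Classical in
/-- The stack Laplacian `Δ_ρ u (x) = Σ_{t(e)=x} R_ρ(e, u(s e)) − u x`. -/
noncomputable def stackLap {V E : Type*} (src tgt : E → V) (ρ : V → ℕ → E)
    (u : V → ℕ) (x : V) : ℤ :=
  (∑ᶠ e : E, if tgt e = x then (Rcount src ρ e (u (src e)) : ℤ) else 0) - u x

/-- The number of times each vertex occurs in a firing sequence. -/
def fireCnt {V : Type*} [DecidableEq V] (seq : List V) : V → ℕ :=
  fun x => seq.count x

/-- `seq` is a legal firing sequence for `σ0`: each fired vertex has more than one chip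
at the moment it is fired. -/
def IsLegalSeq {V E : Type*} [DecidableEq V] (src tgt : E → V) (ρ : V → ℕ → E)
    (σ0 : V → ℤ) (seq : List V) : Prop :=
  ∀ j : Fin seq.length,
    1 < σ0 (seq.get j) + stackLap src tgt ρ (fireCnt (seq.take j)) (seq.get j)

/-- `seq` is a complete firing sequence for `σ0`: afterwards no vertex has more than
one chip. -/
def IsCompleteSeq {V E : Type*} [DecidableEq V] (src tgt : E → V) (ρ : V → ℕ → E)
    (σ0 : V → ℤ) (seq : List V) : Prop :=
  ∀ x : V, σ0 x + stackLap src tgt ρ (fireCnt seq) x ≤ 1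

/-- A rotor configuration `r` is acyclic on `A`: every nonempty finite subset of `A`
contains a vertex whose rotor points outside the subset. -/
def AcyclicOn {V E : Type*} (tgt : E → V) (r : V → E) (A : Set V) : Prop :=
  ∀ A' ⊆ A, A'.Finite → A'.Nonempty → ∃ x ∈ A', tgt (r x) ∉ A'

/-!
Least action: since `σ0 + Δ u_* ≤ 1`, a legal sequence never fires a vertex `x` for the
`(u_* x + 1)`-st time, because after `u_* x` firings of `x` (and at most `u_*` firings
elsewhere) `x` holds at most one chip. So legal sequences have length at most `∑ u_*`, and
firing unstable vertices greedily ends in a complete sequence.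

If `u ≤ u_*` is the odometer of a complete legal sequence, let `A = {u < u_*}`. Every `x ∈ A`
ends with at most one chip instead of exactly one, so the firings missing from `u` send at
least `∑_A (u_* - u)` chips into `A`. Only firings at vertices of `A` are missing, and there are
exactly `∑_A (u_* - u)` of them; but by acyclicity the last rotor `ρ_{u_* x}(x)` of some
`x ∈ A` points out of `A`.
-/

open Finset

section Stack

open Classical

variable {V E : Type*} {src tgt : E → V} {ρ : V → ℕ → E}

theorem Rcount_mono (e : E) : Monotone (Rcount src ρ e) := fun _ _ h =>
  card_le_card (filter_subset_filter _ (Icc_subset_Icc_right h))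

theorem Rcount_eq_add_card_Ioc (e : E) {m n : ℕ} (h : m ≤ n) :
    Rcount src ρ e n = Rcount src ρ e m + #{k ∈ Ioc m n | ρ (src e) k = e} := by
  have hIcc (j : ℕ) : Icc 1 j = Ioc 0 j := Icc_add_one_left_eq_Ioc 0 j
  simp only [Rcount, hIcc]
  rw [← Ioc_union_Ioc_eq_Ioc m.zero_le h, filter_union,
    card_union_of_disjoint (disjoint_filter_filter (Ioc_disjoint_Ioc_of_le le_rfl))]

theorem stackLap_eq_sum (hloc : ∀ x, {e : E | tgt e = x}.Finite) (u : V → ℕ) (x : V) :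
    stackLap src tgt ρ u x =
      ∑ e ∈ (hloc x).toFinset, (Rcount src ρ e (u (src e)) : ℤ) - u x := by
  rw [stackLap, ← finsum_mem_eq_finite_toFinset_sum _ (hloc x), finsum_mem_def]
  rfl

theorem stackLap_le_stackLap (hloc : ∀ x, {e : E | tgt e = x}.Finite) {u v : V → ℕ}
    (huv : u ≤ v) {x : V} (hx : u x = v x) :
    stackLap src tgt ρ u x ≤ stackLap src tgt ρ v x := by
  rw [stackLap_eq_sum hloc, stackLap_eq_sum hloc, hx]
  gcongr with e
  exact_mod_cast Rcount_mono e (huv (src e))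

theorem sum_stackLap_sub_le (hloc : ∀ x, {e : E | tgt e = x}.Finite) {u v : V → ℕ}
    (huv : u ≤ v) {A : Finset V} (hA : ∀ y ∉ A, u y = v y) :
    ∑ x ∈ A, (stackLap src tgt ρ v x - stackLap src tgt ρ u x) ≤
      ∑ y ∈ A, ((#{k ∈ Ioc (u y) (v y) | tgt (ρ y k) ∈ A} : ℤ) - (v y - u y)) := by
  set S : E → Finset ℕ := fun e => {k ∈ Ioc (u (src e)) (v (src e)) | ρ (src e) k = e}
  have hdiff (x : V) : stackLap src tgt ρ v x - stackLap src tgt ρ u x =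
      ∑ e ∈ (hloc x).toFinset, (#(S e) : ℤ) - (v x - u x) := by
    simp only [stackLap_eq_sum hloc, S, Rcount_eq_add_card_Ioc _ (huv _), Nat.cast_add,
      sum_add_distrib]
    ring
  simp only [hdiff, sum_sub_distrib]
  refine sub_le_sub_right ?_ _
  have hcount : ∑ x ∈ A, ∑ e ∈ (hloc x).toFinset, #(S e) ≤
      ∑ y ∈ A, #{k ∈ Ioc (u y) (v y) | tgt (ρ y k) ∈ A} := by
    -- `(e, k) ↦ (src e, k)` is injective because `e = ρ (src e) k`
    simp only [← card_sigma]
    refine card_le_card_of_injOn (fun p => ⟨src p.2.1, p.2.2⟩) ?_ ?_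
    · rintro ⟨x, e, k⟩ h
      simp only [coe_sigma, Set.mem_sigma_iff, mem_coe, Set.Finite.mem_toFinset,
        Set.mem_ofPred_eq, mem_filter, mem_Ioc, S] at h ⊢
      obtain ⟨hx, rfl, ⟨hk1, hk2⟩, hρ⟩ := h
      refine ⟨by_contra fun hy => ?_, ⟨hk1, hk2⟩, by rwa [hρ]⟩
      have := hA _ hy
      omega
    · rintro ⟨x, e, k⟩ h ⟨x', e', k'⟩ h' heq
      simp only [coe_sigma, Set.mem_sigma_iff, mem_coe, Set.Finite.mem_toFinset,
        Set.mem_ofPred_eq, mem_filter, S, Sigma.mk.injEq, heq_eq_eq] at h h' heq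
      obtain ⟨-, rfl, -, he⟩ := h
      obtain ⟨-, rfl, -, he'⟩ := h'
      obtain ⟨hsrc, rfl⟩ := heq
      have : e = e' := by rw [← he, ← he', hsrc]
      subst this
      rfl
  exact_mod_cast hcount

theorem eq_of_le_of_acyclicOn (hloc : ∀ x, {e : E | tgt e = x}.Finite) (σ0 : V → ℤ)
    {u v : V → ℕ} (hv : (Function.support v).Finite) (huv : u ≤ v)
    (hu : ∀ x, σ0 x + stackLap src tgt ρ u x ≤ 1)
    (hv_eq : ∀ x, v x ≠ 0 → σ0 x + stackLap src tgt ρ v x = 1)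
    (hacyc : AcyclicOn tgt (fun x => ρ x (v x)) (Function.support v)) : u = v := by
  by_contra hne
  set A : Finset V := {x ∈ hv.toFinset | u x < v x}
  have hmem (x : V) : x ∈ A ↔ u x < v x := by
    simp only [A, mem_filter, Set.Finite.mem_toFinset, Function.mem_support]
    exact ⟨And.right, fun h => ⟨by omega, h⟩⟩
  have hA_out (y : V) (hy : y ∉ A) : u y = v y := by
    rw [hmem] at hy
    exact le_antisymm (huv y) (not_lt.1 hy)
  have hA_ne : A.Nonempty := by
    obtain ⟨x, hx⟩ := Function.ne_iff.1 hne
    exact ⟨x, (hmem x).2 (lt_of_le_of_ne (huv x) hx)⟩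
  have hA_supp (x : V) (hx : x ∈ A) : v x ≠ 0 := ((Nat.zero_le _).trans_lt ((hmem x).1 hx)).ne'
  obtain ⟨x₀, hx₀, hx₀_out⟩ :=
    hacyc A hA_supp A.finite_toSet (by exact_mod_cast hA_ne)
  have hgain : 0 ≤ ∑ x ∈ A, (stackLap src tgt ρ v x - stackLap src tgt ρ u x) :=
    sum_nonneg fun x hx => by
      have := hv_eq x (hA_supp x hx)
      linarith [hu x]
  have hloss : ∑ y ∈ A, ((#{k ∈ Ioc (u y) (v y) | tgt (ρ y k) ∈ A} : ℤ) - (v y - u y)) < 0 := by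
    have hflow (y : V) : #{k ∈ Ioc (u y) (v y) | tgt (ρ y k) ∈ A} ≤ v y - u y :=
      (card_filter_le _ _).trans (Nat.card_Ioc _ _).le
    have hlt : #{k ∈ Ioc (u x₀) (v x₀) | tgt (ρ x₀ k) ∈ A} < v x₀ - u x₀ := by
      rw [← Nat.card_Ioc]
      exact card_lt_card (filter_ssubset.2 ⟨v x₀, mem_Ioc.2 ⟨(hmem x₀).1 hx₀, le_rfl⟩, hx₀_out⟩)
    refine sum_neg' (fun y _ => ?_) ⟨x₀, hx₀, ?_⟩
    · rw [sub_nonpos, ← Nat.cast_sub (huv y)]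
      exact_mod_cast hflow y
    · rw [sub_neg, ← Nat.cast_sub (huv x₀)]
      exact_mod_cast hlt
  linarith [sum_stackLap_sub_le (src := src) (ρ := ρ) hloc huv hA_out]

end Stack

section Firing

variable {V E : Type*} [DecidableEq V] {src tgt : E → V} {ρ : V → ℕ → E} {σ0 : V → ℤ}

theorem fireCnt_append_singleton (l : List V) (x y : V) :
    fireCnt (l ++ [x]) y = fireCnt l y + if x = y then 1 else 0 := by
  simp [fireCnt, List.count_singleton]

theorem isLegalSeq_nil : IsLegalSeq src tgt ρ σ0 [] := fun j => j.elim0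

theorem isLegalSeq_append_singleton_iff {l : List V} {x : V} :
    IsLegalSeq src tgt ρ σ0 (l ++ [x]) ↔
      IsLegalSeq src tgt ρ σ0 l ∧ 1 < σ0 x + stackLap src tgt ρ (fireCnt l) x := by
  constructor
  · intro h
    refine ⟨fun j => ?_, ?_⟩
    · simpa [List.getElem_append_left, List.take_append_of_le_length j.2.le] using
        h ⟨j, by simp⟩
    · simpa using h ⟨l.length, by simp⟩
  · rintro ⟨hl, hx⟩ ⟨j, hj⟩
    rw [List.length_append, List.length_singleton] at hj
    rcases Nat.lt_succ_iff_lt_or_eq.1 hj with hj | rfl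
    · simpa [List.getElem_append_left hj, List.take_append_of_le_length hj.le] using hl ⟨j, hj⟩
    · simpa using hx

theorem IsLegalSeq.fireCnt_le (hloc : ∀ x, {e : E | tgt e = x}.Finite) {v : V → ℕ}
    (hv : ∀ x, σ0 x + stackLap src tgt ρ v x ≤ 1) {l : List V}
    (hl : IsLegalSeq src tgt ρ σ0 l) : fireCnt l ≤ v := by
  induction l using List.reverseRecOn with
  | nil => intro x; simp [fireCnt]
  | append_singleton l x ih =>
    obtain ⟨hl, hx⟩ := isLegalSeq_append_singleton_iff.1 hl
    have hle := ih hl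
    have hlt : fireCnt l x < v x := by
      by_contra! hge
      have := stackLap_le_stackLap (src := src) (ρ := ρ) hloc hle (le_antisymm (hle x) hge)
      linarith [hv x]
    intro y
    rw [fireCnt_append_singleton]
    split_ifs with hxy
    · exact hxy ▸ hlt
    · exact hle y

theorem IsLegalSeq.length_le (hloc : ∀ x, {e : E | tgt e = x}.Finite) {v : V → ℕ}
    (hvfin : (Function.support v).Finite) (hv : ∀ x, σ0 x + stackLap src tgt ρ v x ≤ 1)
    {l : List V} (hl : IsLegalSeq src tgt ρ σ0 l) : l.length ≤ ∑ x ∈ hvfin.toFinset, v x := by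
  have hcnt := hl.fireCnt_le hloc hv
  have hsupp (x : V) (hx : x ∈ l) : x ∈ hvfin.toFinset := by
    have : 0 < fireCnt l x := List.count_pos_iff.2 hx
    simpa using (this.trans_le (hcnt x)).ne'
  calc l.length = ∑ x ∈ hvfin.toFinset, fireCnt l x := by
        simpa only [Multiset.coe_card, Multiset.coe_count, fireCnt] using
          (Multiset.sum_count_eq_card (m := (l : Multiset V)) hsupp).symm
    _ ≤ ∑ x ∈ hvfin.toFinset, v x := Finset.sum_le_sum fun x _ => hcnt x

theorem exists_isLegalSeq_isCompleteSeq (hloc : ∀ x, {e : E | tgt e = x}.Finite) {v : V → ℕ}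
    (hvfin : (Function.support v).Finite) (hv : ∀ x, σ0 x + stackLap src tgt ρ v x ≤ 1) :
    ∃ l, IsLegalSeq src tgt ρ σ0 l ∧ IsCompleteSeq src tgt ρ σ0 l := by
  by_contra! hstuck
  have hlong (n : ℕ) : ∃ l, IsLegalSeq src tgt ρ σ0 l ∧ l.length = n := by
    induction n with
    | zero => exact ⟨[], isLegalSeq_nil, rfl⟩
    | succ n ih =>
      obtain ⟨l, hl, rfl⟩ := ih
      obtain ⟨x, hx⟩ : ∃ x, 1 < σ0 x + stackLap src tgt ρ (fireCnt l) x := by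
        simpa [IsCompleteSeq] using hstuck l hl
      exact ⟨l ++ [x], isLegalSeq_append_singleton_iff.2 ⟨hl, hx⟩, by simp⟩
  obtain ⟨l, hl, hlen⟩ := hlong (∑ x ∈ hvfin.toFinset, v x + 1)
  have := hl.length_le hloc hvfin hv
  omega

end Firing

theorem odometer_characterization_general {V E : Type*} [DecidableEq V]
    (src tgt : E → V) (ρ : V → ℕ → E)
    (hloc : ∀ x : V, {e : E | tgt e = x}.Finite)
    (σ0 : V → ℤ)
    (ustar : V → ℕ) (hustar : (Function.support ustar).Finite)
    (hle : ∀ x, σ0 x + stackLap src tgt ρ ustar x ≤ 1)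
    (heq : ∀ x, ustar x ≠ 0 → σ0 x + stackLap src tgt ρ ustar x = 1)
    (hacyc : AcyclicOn tgt (fun x => ρ x (ustar x)) (Function.support ustar)) :
    (∃ seq : List V, IsLegalSeq src tgt ρ σ0 seq ∧ IsCompleteSeq src tgt ρ σ0 seq) ∧
    ∀ seq : List V, IsLegalSeq src tgt ρ σ0 seq → IsCompleteSeq src tgt ρ σ0 seq →
      fireCnt seq = ustar :=
  ⟨exists_isLegalSeq_isCompleteSeq hloc hustar hle, fun _ hleg hcomp =>
    eq_of_le_of_acyclicOn hloc σ0 hustar (hleg.fireCnt_le hloc hle) hcomp heq hacyc⟩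

/-- Odometer characterization ("no hills, no holes, no cycles"): if `u_*` is finitely
supported, `σ_* = σ_0 + Δ_ρ u_* ≤ 1` everywhere, `σ_* = 1` on the support of `u_*`,
and `Top_ρ(u_*)` is acyclic on the support, then there exists a finite complete legal
firing sequence for `σ_0` and the odometer of every such sequence equals `u_*`. -/
theorem odometer_characterization {V E : Type*} [DecidableEq V]
    (src tgt : E → V) (ρ : V → ℕ → E)
    (hsrc : ∀ x k, src (ρ x k) = x)
    (hloc : ∀ x : V, {e : E | tgt e = x}.Finite)
    (hconn : ∀ x y : V, Relation.ReflTransGen (fun a b => ∃ e, src e = a ∧ tgt e = b) x y)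
    (σ0 : V → ℤ) (hσ0 : (Function.support σ0).Finite)
    (ustar : V → ℕ) (hustar : (Function.support ustar).Finite)
    (hle : ∀ x, σ0 x + stackLap src tgt ρ ustar x ≤ 1)
    (heq : ∀ x, ustar x ≠ 0 → σ0 x + stackLap src tgt ρ ustar x = 1)
    (hacyc : AcyclicOn tgt (fun x => ρ x (ustar x)) (Function.support ustar)) :
    (∃ seq : List V, IsLegalSeq src tgt ρ σ0 seq ∧ IsCompleteSeq src tgt ρ σ0 seq) ∧
    ∀ seq : List V, IsLegalSeq src tgt ρ σ0 seq → IsCompleteSeq src tgt ρ σ0 seq →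
      fireCnt seq = ustar :=
  odometer_characterization_general src tgt ρ hloc σ0 ustar hustar hle heq hacyc
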